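/- arXiv:2110.13444 — 2 statements merged into one kernel-verified Lean document; each statement's English description precedes it below -/
import Mathlib

section
/- With the standing setup, define the time-weighted multi-dimensional assignment distance d(X, Y) as the infimum of the objective c(X, Y, W^{1:T}) over all sequences W^{1:T} of matrices satisfying the relaxed assignment constraints AND having all entries in {0, 1}. Then for any three indexed families of trajectories X, Z, Y the triangle inequality holds: d(X, Y) ≤ d(X, Z) + d(Z, Y). -/
open Finset

noncomputable section

/-- The GOSPA base distance on `Option E`. -/
def dG {E : Type*} [MetricSpace E] (c p : ℝ) : Option E → Option E → ℝ
  | some x, some y => min c (dist x y)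
  | none, none => 0
  | _, _ => c / 2 ^ (1 / p)

/-- Relaxed assignment constraints for a soft-assignment matrix. -/
def Relaxed {m n : ℕ} (W : Matrix (Fin (m + 1)) (Fin (n + 1)) ℝ) : Prop :=
  (∀ i j, 0 ≤ W i j) ∧
  (∀ j : Fin n, ∑ i, W i j.castSucc = 1) ∧
  (∀ i : Fin m, ∑ j, W i.castSucc j = 1) ∧
  W (Fin.last m) (Fin.last n) = 0

/-- A matrix is binary if every entry is `0` or `1`. -/
def IsBinary {m n : ℕ} (W : Matrix (Fin (m + 1)) (Fin (n + 1)) ℝ) : Prop :=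
  ∀ i j, W i j = 0 ∨ W i j = 1

/-- Extend an indexed family of trajectories with an extra all-`none` trajectory. -/
def extTraj {E : Type*} {T n : ℕ} (X : Fin n → Fin T → Option E) :
    Fin (n + 1) → Fin T → Option E :=
  fun i => if h : (i : ℕ) < n then X ⟨i, h⟩ else fun _ => none

/-- The matrix `D^k_{X,Y}(i,j) = dG(X_i(k), Y_j(k))^p` of localisation costs at time `k`. -/
def Dmat {E : Type*} [MetricSpace E] (c p : ℝ) {T nX nY : ℕ}
    (X : Fin nX → Fin T → Option E) (Y : Fin nY → Fin T → Option E) (k : Fin T) :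
    Matrix (Fin (nX + 1)) (Fin (nY + 1)) ℝ :=
  fun i j => dG c p (extTraj X i k) (extTraj Y j k) ^ p

/-- The objective of the time-weighted LP trajectory metric for a sequence of
soft-assignment matrices `W`. -/
def obj {E : Type*} [MetricSpace E] (c p γ : ℝ) (w1 w2 : ℕ → ℝ) {T nX nY : ℕ}
    (X : Fin nX → Fin T → Option E) (Y : Fin nY → Fin T → Option E)
    (W : Fin T → Matrix (Fin (nX + 1)) (Fin (nY + 1)) ℝ) : ℝ :=
  (∑ k : Fin T, w1 k.1 * ∑ i, ∑ j, Dmat c p X Y k i j * W k i j +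
      γ ^ p / 2 * ∑ k : Fin (T - 1), w2 k.1 *
        ∑ i : Fin nX, ∑ j : Fin nY,
          |W ⟨k.1, by have := k.2; omega⟩ i.castSucc j.castSucc -
            W ⟨k.1 + 1, by have := k.2; omega⟩ i.castSucc j.castSucc|) ^ (1 / p)

/-- The time-weighted LP trajectory metric: infimum of the objective over all sequences of
matrices satisfying the relaxed assignment constraints. -/
def dbar {E : Type*} [MetricSpace E] (c p γ : ℝ) (w1 w2 : ℕ → ℝ) {T nX nY : ℕ}
    (X : Fin nX → Fin T → Option E) (Y : Fin nY → Fin T → Option E) : ℝ :=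
  ⨅ W : {W : Fin T → Matrix (Fin (nX + 1)) (Fin (nY + 1)) ℝ // ∀ k, Relaxed (W k)},
    obj c p γ w1 w2 X Y W.1

/-- The time-weighted multi-dimensional assignment metric: infimum of the objective over all
sequences of binary matrices satisfying the relaxed assignment constraints. -/
def dmd {E : Type*} [MetricSpace E] (c p γ : ℝ) (w1 w2 : ℕ → ℝ) {T nX nY : ℕ}
    (X : Fin nX → Fin T → Option E) (Y : Fin nY → Fin T → Option E) : ℝ :=
  ⨅ W : {W : Fin T → Matrix (Fin (nX + 1)) (Fin (nY + 1)) ℝ //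
      ∀ k, Relaxed (W k) ∧ IsBinary (W k)},
    obj c p γ w1 w2 X Y W.1


section helpers
open Finset

variable {E : Type*} [MetricSpace E]

lemma dG_nonneg {c p : ℝ} (hc : 0 ≤ c) (x y : Option E) : 0 ≤ dG c p x y := by
  have h2 : (0:ℝ) ≤ c / 2 ^ (1/p) := by positivity
  cases x <;> cases y <;>
    simp only [dG] <;> [skip; exact h2; exact h2; exact le_min hc dist_nonneg]
  exact le_refl 0

lemma dG_triangle {c p : ℝ} (hc : 0 ≤ c) (hp : 1 ≤ p) (x z y : Option E) :
    dG c p x y ≤ dG c p x z + dG c p z y := by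
  have hp0 : 0 < p := lt_of_lt_of_le one_pos hp
  have h2p : (0:ℝ) < 2 ^ (1/p) := by positivity
  have h2' : (2:ℝ) ^ (1/p) ≤ 2 := by
    calc (2:ℝ)^(1/p) ≤ 2 ^ (1:ℝ) :=
      Real.rpow_le_rpow_of_exponent_le one_le_two (by rw [div_le_one hp0]; exact hp)
    _ = 2 := Real.rpow_one 2
  have hc2 : 0 ≤ c / 2^(1/p) := by positivity
  have hcd : c ≤ c / 2^(1/p) + c / 2^(1/p) := by
    rw [← add_div, le_div_iff₀ h2p]; nlinarith
  have hmin : ∀ a b : E, 0 ≤ min c (dist a b) := fun a b => le_min hc dist_nonneg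
  have hminc : ∀ a b : E, min c (dist a b) ≤ c := fun a b => min_le_left _ _
  cases x <;> cases z <;> cases y <;> simp only [dG]
  · linarith
  · linarith
  · linarith
  · rename_i b a; linarith [hmin b a]
  · linarith
  · rename_i a b; linarith [hminc a b]
  · rename_i a b; linarith [hmin a b]
  · rename_i a b d
    rcases le_total c (dist a b) with h | h
    · rw [min_eq_left h]; linarith [hminc a d, hmin b d]
    · rcases le_total c (dist b d) with h' | h'
      · rw [min_eq_left h']; linarith [hminc a d, hmin a b]
      · rw [min_eq_right h, min_eq_right h']
        calc min c (dist a d) ≤ dist a d := min_le_right _ _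
        _ ≤ dist a b + dist b d := dist_triangle a b d

lemma binary_sum {ι : Type*} (s : Finset ι) (f : ι → ℝ)
    (hb : ∀ i ∈ s, f i = 0 ∨ f i = 1) (h1 : ∑ i ∈ s, f i ≤ 1) :
    (∑ i ∈ s, f i) = 0 ∨ (∑ i ∈ s, f i) = 1 := by
  classical
  by_cases hex : ∃ i ∈ s, f i = 1
  · right
    obtain ⟨i0, hi0, hfi0⟩ := hex
    have hnn : ∀ i ∈ s, 0 ≤ f i := fun i hi => by rcases hb i hi with h | h <;> simp [h]
    have h2 : (1:ℝ) ≤ ∑ i ∈ s, f i := hfi0 ▸ Finset.single_le_sum hnn hi0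
    linarith
  · left
    push_neg at hex
    exact Finset.sum_eq_zero fun i hi => (hb i hi).resolve_right (hex i hi)

lemma rpow_one_div_rpow {x p : ℝ} (hx : 0 ≤ x) (hpne : p ≠ 0) : (x ^ (1/p)) ^ p = x := by
  rw [← Real.rpow_mul hx, one_div, inv_mul_cancel₀ hpne, Real.rpow_one]

lemma real_add_pow_le {a b p : ℝ} (ha : 0 ≤ a) (hb : 0 ≤ b) (hp : 1 ≤ p) :
    a ^ p + b ^ p ≤ (a + b) ^ p := by
  have h := NNReal.coe_le_coe.2 (NNReal.add_rpow_le_rpow_add a.toNNReal b.toNNReal hp)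
  simp only [NNReal.coe_rpow, NNReal.coe_add, Real.coe_toNNReal _ ha, Real.coe_toNNReal _ hb] at h
  exact h

lemma fp_eval {w u d p : ℝ} (hwu : 0 ≤ w * u) (hd : 0 ≤ d) (hpne : p ≠ 0) :
    ((w * u) ^ (1/p) * d) ^ p = (w * u) * d ^ p := by
  rw [Real.mul_rpow (Real.rpow_nonneg hwu _) hd, rpow_one_div_rpow hwu hpne]

end helpers

section matrices
open Finset

variable {nX nZ nY : ℕ}

lemma hcs {n : ℕ} : ∀ z : Fin n, (z.castSucc : Fin (n+1)) ≠ Fin.last n :=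
  fun z => Fin.ne_of_lt (Fin.castSucc_lt_last z)

/-- Composition of two assignment matrices. -/
def compM (W : Matrix (Fin (nX+1)) (Fin (nZ+1)) ℝ) (V : Matrix (Fin (nZ+1)) (Fin (nY+1)) ℝ) :
    Matrix (Fin (nX+1)) (Fin (nY+1)) ℝ :=
  fun i j =>
    if i = Fin.last nX then
      if j = Fin.last nY then 0
      else (∑ z : Fin nZ, W (Fin.last nX) z.castSucc * V z.castSucc j) + V (Fin.last nZ) j
    else
      if j = Fin.last nY then
        (∑ z : Fin nZ, W i z.castSucc * V z.castSucc (Fin.last nY)) + W i (Fin.last nZ)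
      else ∑ z : Fin nZ, W i z.castSucc * V z.castSucc j

/-- Coupling tensor witnessing the composition. -/
def coup (W : Matrix (Fin (nX+1)) (Fin (nZ+1)) ℝ) (V : Matrix (Fin (nZ+1)) (Fin (nY+1)) ℝ) :
    Fin (nX+1) → Fin (nZ+1) → Fin (nY+1) → ℝ :=
  fun i z j =>
    if z = Fin.last nZ then
      if j = Fin.last nY then W i (Fin.last nZ)
      else if i = Fin.last nX then V (Fin.last nZ) j else 0
    else W i z * V z j

variable {W : Matrix (Fin (nX+1)) (Fin (nZ+1)) ℝ} {V : Matrix (Fin (nZ+1)) (Fin (nY+1)) ℝ}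

lemma coup_castSucc (i j) (z : Fin nZ) :
    coup W V i z.castSucc j = W i z.castSucc * V z.castSucc j := by
  simp [coup, hcs z]

lemma coup_nonneg (hW : Relaxed W) (hV : Relaxed V) (i z j) : 0 ≤ coup W V i z j := by
  unfold coup
  split_ifs <;> first
    | exact hW.1 _ _
    | exact hV.1 _ _
    | exact le_refl 0
    | exact mul_nonneg (hW.1 _ _) (hV.1 _ _)

lemma compM_inner (i : Fin nX) (j : Fin nY) :
    compM W V i.castSucc j.castSucc
      = ∑ z : Fin nZ, W i.castSucc z.castSucc * V z.castSucc j.castSucc := by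
  simp [compM, hcs i, hcs j]

lemma compM_le_sum_coup (hW : Relaxed W) (hV : Relaxed V) (i j) :
    compM W V i j ≤ ∑ z, coup W V i z j := by
  rw [Fin.sum_univ_castSucc]
  have key : ∑ z : Fin nZ, coup W V i z.castSucc j = ∑ z : Fin nZ, W i z.castSucc * V z.castSucc j :=
    Finset.sum_congr rfl fun z _ => coup_castSucc i j z
  rw [key]
  by_cases hi : i = Fin.last nX <;> by_cases hj : j = Fin.last nY <;>
      simp only [compM, coup, hi, hj, if_true, if_false, ite_true, ite_false, if_pos rfl,
        if_neg, reduceIte]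
  · exact add_nonneg (Finset.sum_nonneg fun z _ => mul_nonneg (hW.1 _ _) (hV.1 _ _)) (hW.1 _ _)
  · exact le_refl _
  · exact le_refl _
  · simp

lemma sum_coup_j (hW : Relaxed W) (hV : Relaxed V) (i z) (h : ¬(i = Fin.last nX ∧ z = Fin.last nZ)) :
    ∑ j, coup W V i z j ≤ W i z := by
  by_cases hz : z = Fin.last nZ
  · have hi : i ≠ Fin.last nX := fun hi => h ⟨hi, hz⟩
    subst hz
    rw [Fin.sum_univ_castSucc]
    have h1 : ∀ j : Fin nY, coup W V i (Fin.last nZ) j.castSucc = 0 := by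
      intro j
      simp [coup, hcs j, hi]
    have h2 : coup W V i (Fin.last nZ) (Fin.last nY) = W i (Fin.last nZ) := by simp [coup]
    rw [Finset.sum_congr rfl fun j _ => h1 j, h2]
    simp
  · obtain ⟨z', rfl⟩ : ∃ z' : Fin nZ, z'.castSucc = z := by
      rcases Fin.eq_castSucc_or_eq_last z with ⟨z', h⟩ | h
      · exact ⟨z', h.symm⟩
      · exact absurd h hz
    have h1 : ∀ j, coup W V i z'.castSucc j = W i z'.castSucc * V z'.castSucc j :=
      fun j => coup_castSucc i j z'
    rw [Finset.sum_congr rfl fun j _ => h1 j, ← Finset.mul_sum, hV.2.2.1 z', mul_one]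

lemma sum_coup_i (hW : Relaxed W) (hV : Relaxed V) (z j) (h : ¬(z = Fin.last nZ ∧ j = Fin.last nY)) :
    ∑ i, coup W V i z j ≤ V z j := by
  by_cases hz : z = Fin.last nZ
  · have hj : j ≠ Fin.last nY := fun hj => h ⟨hz, hj⟩
    subst hz
    rw [Fin.sum_univ_castSucc]
    have h1 : ∀ i : Fin nX, coup W V i.castSucc (Fin.last nZ) j = 0 := by
      intro i
      simp [coup, hj, hcs i]
    have h2 : coup W V (Fin.last nX) (Fin.last nZ) j = V (Fin.last nZ) j := by
      simp [coup, hj]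
    rw [Finset.sum_congr rfl fun i _ => h1 i, h2]
    simp
  · obtain ⟨z', rfl⟩ : ∃ z' : Fin nZ, z'.castSucc = z := by
      rcases Fin.eq_castSucc_or_eq_last z with ⟨z', h⟩ | h
      · exact ⟨z', h.symm⟩
      · exact absurd h hz
    have h1 : ∀ i, coup W V i z'.castSucc j = W i z'.castSucc * V z'.castSucc j :=
      fun i => coup_castSucc i j z'
    rw [Finset.sum_congr rfl fun i _ => h1 i, ← Finset.sum_mul, hW.2.1 z', one_mul]

end matrices

section matrices2
open Finset
variable {nX nZ nY : ℕ}
variable {W : Matrix (Fin (nX+1)) (Fin (nZ+1)) ℝ} {V : Matrix (Fin (nZ+1)) (Fin (nY+1)) ℝ}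

lemma compM_relaxed (hW : Relaxed W) (hV : Relaxed V) : Relaxed (compM W V) := by
  refine ⟨?_, ?_, ?_, ?_⟩
  · intro i j
    unfold compM
    have hnn : ∀ (a : Fin (nX+1)) (b : Fin (nY+1)),
        (0:ℝ) ≤ ∑ z : Fin nZ, W a z.castSucc * V z.castSucc b :=
      fun a b => Finset.sum_nonneg fun z _ => mul_nonneg (hW.1 _ _) (hV.1 _ _)
    split_ifs
    · exact le_refl 0
    · exact add_nonneg (hnn _ _) (hV.1 _ _)
    · exact add_nonneg (hnn _ _) (hW.1 _ _)
    · exact hnn _ _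
  · intro j
    have hj : (j.castSucc : Fin (nY+1)) ≠ Fin.last nY := hcs j
    rw [Fin.sum_univ_castSucc]
    have h1 : ∀ i : Fin nX, compM W V i.castSucc j.castSucc
        = ∑ z : Fin nZ, W i.castSucc z.castSucc * V z.castSucc j.castSucc := by
      intro i; simp [compM, hcs i, hj]
    have h2 : compM W V (Fin.last nX) j.castSucc
        = (∑ z : Fin nZ, W (Fin.last nX) z.castSucc * V z.castSucc j.castSucc)
          + V (Fin.last nZ) j.castSucc := by
      simp [compM, hj]
    have h3 : ∀ z : Fin nZ, (∑ i : Fin nX, W i.castSucc z.castSucc * V z.castSucc j.castSucc)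
        + W (Fin.last nX) z.castSucc * V z.castSucc j.castSucc = V z.castSucc j.castSucc := by
      intro z
      have hz := hW.2.1 z
      rw [Fin.sum_univ_castSucc] at hz
      rw [← Finset.sum_mul, ← add_mul, hz, one_mul]
    calc (∑ i : Fin nX, compM W V i.castSucc j.castSucc) + compM W V (Fin.last nX) j.castSucc
        = (∑ i : Fin nX, ∑ z : Fin nZ, W i.castSucc z.castSucc * V z.castSucc j.castSucc)
          + ((∑ z : Fin nZ, W (Fin.last nX) z.castSucc * V z.castSucc j.castSucc)
            + V (Fin.last nZ) j.castSucc) := by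
          rw [Finset.sum_congr rfl fun i _ => h1 i, h2]
      _ = (∑ z : Fin nZ, ((∑ i : Fin nX, W i.castSucc z.castSucc * V z.castSucc j.castSucc)
            + W (Fin.last nX) z.castSucc * V z.castSucc j.castSucc)) + V (Fin.last nZ) j.castSucc := by
          rw [Finset.sum_add_distrib, Finset.sum_comm]; ring
      _ = (∑ z : Fin nZ, V z.castSucc j.castSucc) + V (Fin.last nZ) j.castSucc := by
          rw [Finset.sum_congr rfl fun z _ => h3 z]
      _ = ∑ z : Fin (nZ+1), V z j.castSucc := (Fin.sum_univ_castSucc (f := fun z => V z j.castSucc)).symm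
      _ = 1 := hV.2.1 j
  · intro i
    have hi : (i.castSucc : Fin (nX+1)) ≠ Fin.last nX := hcs i
    rw [Fin.sum_univ_castSucc]
    have h1 : ∀ j : Fin nY, compM W V i.castSucc j.castSucc
        = ∑ z : Fin nZ, W i.castSucc z.castSucc * V z.castSucc j.castSucc := by
      intro j; simp [compM, hcs j, hi]
    have h2 : compM W V i.castSucc (Fin.last nY)
        = (∑ z : Fin nZ, W i.castSucc z.castSucc * V z.castSucc (Fin.last nY))
          + W i.castSucc (Fin.last nZ) := by
      simp [compM, hi]
    have h3 : ∀ z : Fin nZ, (∑ j : Fin nY, W i.castSucc z.castSucc * V z.castSucc j.castSucc)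
        + W i.castSucc z.castSucc * V z.castSucc (Fin.last nY) = W i.castSucc z.castSucc := by
      intro z
      have hz := hV.2.2.1 z
      rw [Fin.sum_univ_castSucc] at hz
      rw [← Finset.mul_sum, ← mul_add, hz, mul_one]
    calc (∑ j : Fin nY, compM W V i.castSucc j.castSucc) + compM W V i.castSucc (Fin.last nY)
        = (∑ j : Fin nY, ∑ z : Fin nZ, W i.castSucc z.castSucc * V z.castSucc j.castSucc)
          + ((∑ z : Fin nZ, W i.castSucc z.castSucc * V z.castSucc (Fin.last nY))
            + W i.castSucc (Fin.last nZ)) := by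
          rw [Finset.sum_congr rfl fun j _ => h1 j, h2]
      _ = (∑ z : Fin nZ, ((∑ j : Fin nY, W i.castSucc z.castSucc * V z.castSucc j.castSucc)
            + W i.castSucc z.castSucc * V z.castSucc (Fin.last nY))) + W i.castSucc (Fin.last nZ) := by
          rw [Finset.sum_add_distrib, Finset.sum_comm]; ring
      _ = (∑ z : Fin nZ, W i.castSucc z.castSucc) + W i.castSucc (Fin.last nZ) := by
          rw [Finset.sum_congr rfl fun z _ => h3 z]
      _ = ∑ z : Fin (nZ+1), W i.castSucc z := (Fin.sum_univ_castSucc (f := fun z => W i.castSucc z)).symm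
      _ = 1 := hW.2.2.1 i
  · simp [compM]

lemma compM_binary (hW : Relaxed W) (hV : Relaxed V) (hWb : IsBinary W) (hVb : IsBinary V) :
    IsBinary (compM W V) := by
  have hW1 : ∀ i z, W i z ≤ 1 := fun i z => by rcases hWb i z with h | h <;> simp [h]
  have hV1 : ∀ z j, V z j ≤ 1 := fun z j => by rcases hVb z j with h | h <;> simp [h]
  have hmulbin : ∀ i z j, W i z * V z j = 0 ∨ W i z * V z j = 1 := fun i z j => by
    rcases hWb i z with h | h <;> rcases hVb z j with h' | h' <;> simp [h, h']
  intro i j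
  by_cases hi : i = Fin.last nX <;> by_cases hj : j = Fin.last nY
  · left; simp [compM, hi, hj]
  · -- i = last, j ≠ last
    obtain ⟨j', rfl⟩ : ∃ j' : Fin nY, j'.castSucc = j := by
      rcases Fin.eq_castSucc_or_eq_last j with ⟨j', h⟩ | h
      · exact ⟨j', h.symm⟩
      · exact absurd h hj
    set g : Fin (nZ+1) → ℝ := fun z =>
      if z = Fin.last nZ then V (Fin.last nZ) j'.castSucc else W (Fin.last nX) z * V z j'.castSucc
      with hgdef
    have hval : compM W V i j'.castSucc = ∑ z : Fin (nZ+1), g z := by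
      rw [Fin.sum_univ_castSucc]
      simp only [hgdef, hcs, if_neg, if_pos rfl, ite_false, ite_true]
      simp [compM, hi, hcs j']
    rw [hval]
    refine binary_sum _ _ (fun z _ => ?_) ?_
    · simp only [hgdef]
      split_ifs
      · exact hVb _ _
      · exact hmulbin _ _ _
    · calc ∑ z : Fin (nZ+1), g z ≤ ∑ z : Fin (nZ+1), V z j'.castSucc := by
            refine Finset.sum_le_sum fun z _ => ?_
            simp only [hgdef]
            split_ifs with h
            · subst h; exact le_refl _
            · calc W (Fin.last nX) z * V z j'.castSucc ≤ 1 * V z j'.castSucc :=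
                    mul_le_mul_of_nonneg_right (hW1 _ _) (hV.1 _ _)
                _ = V z j'.castSucc := one_mul _
        _ = 1 := hV.2.1 j'
  · -- i ≠ last, j = last
    obtain ⟨i', rfl⟩ : ∃ i' : Fin nX, i'.castSucc = i := by
      rcases Fin.eq_castSucc_or_eq_last i with ⟨i', h⟩ | h
      · exact ⟨i', h.symm⟩
      · exact absurd h hi
    set g : Fin (nZ+1) → ℝ := fun z =>
      if z = Fin.last nZ then W i'.castSucc (Fin.last nZ)
      else W i'.castSucc z * V z (Fin.last nY)
      with hgdef
    have hval : compM W V i'.castSucc j = ∑ z : Fin (nZ+1), g z := by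
      rw [Fin.sum_univ_castSucc]
      simp only [hgdef, hcs, if_neg, if_pos rfl, ite_false, ite_true]
      simp [compM, hj, hcs i']
    rw [hval]
    refine binary_sum _ _ (fun z _ => ?_) ?_
    · simp only [hgdef]
      split_ifs
      · exact hWb _ _
      · exact hmulbin _ _ _
    · calc ∑ z : Fin (nZ+1), g z ≤ ∑ z : Fin (nZ+1), W i'.castSucc z := by
            refine Finset.sum_le_sum fun z _ => ?_
            simp only [hgdef]
            split_ifs with h
            · subst h; exact le_refl _
            · calc W i'.castSucc z * V z (Fin.last nY) ≤ W i'.castSucc z * 1 :=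
                    mul_le_mul_of_nonneg_left (hV1 _ _) (hW.1 _ _)
                _ = W i'.castSucc z := mul_one _
        _ = 1 := hW.2.2.1 i'
  · -- inner
    obtain ⟨i', rfl⟩ : ∃ i' : Fin nX, i'.castSucc = i := by
      rcases Fin.eq_castSucc_or_eq_last i with ⟨i', h⟩ | h
      · exact ⟨i', h.symm⟩
      · exact absurd h hi
    have hval : compM W V i'.castSucc j = ∑ z : Fin nZ, W i'.castSucc z.castSucc * V z.castSucc j := by
      simp [compM, hi, hj, hcs i']
    rw [hval]
    refine binary_sum _ _ (fun z _ => hmulbin _ _ _) ?_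
    have hrow := hW.2.2.1 i'
    rw [Fin.sum_univ_castSucc] at hrow
    calc ∑ z : Fin nZ, W i'.castSucc z.castSucc * V z.castSucc j
        ≤ ∑ z : Fin nZ, W i'.castSucc z.castSucc := by
          refine Finset.sum_le_sum fun z _ => ?_
          calc W i'.castSucc z.castSucc * V z.castSucc j ≤ W i'.castSucc z.castSucc * 1 :=
                mul_le_mul_of_nonneg_left (hV1 _ _) (hW.1 _ _)
            _ = W i'.castSucc z.castSucc := mul_one _
      _ ≤ 1 := by linarith [hW.1 i'.castSucc (Fin.last nZ)]

/-- The trivial all-to-dummy assignment matrix. -/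
def trivMat (m n : ℕ) : Matrix (Fin (m+1)) (Fin (n+1)) ℝ :=
  fun i j =>
    if i = Fin.last m then (if j = Fin.last n then 0 else 1)
    else if j = Fin.last n then 1 else 0

lemma trivMat_relaxed (m n : ℕ) : Relaxed (trivMat m n) := by
  refine ⟨?_, ?_, ?_, ?_⟩
  · intro i j; unfold trivMat; split_ifs <;> norm_num
  · intro j
    rw [Fin.sum_univ_castSucc]
    have h1 : ∀ i : Fin m, trivMat m n i.castSucc j.castSucc = 0 := by
      intro i; simp [trivMat, hcs i, hcs j]
    rw [Finset.sum_congr rfl fun i _ => h1 i]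
    simp [trivMat, hcs j]
  · intro i
    rw [Fin.sum_univ_castSucc]
    have h1 : ∀ j : Fin n, trivMat m n i.castSucc j.castSucc = 0 := by
      intro j; simp [trivMat, hcs i, hcs j]
    rw [Finset.sum_congr rfl fun j _ => h1 j]
    simp [trivMat, hcs i]
  · simp [trivMat]

lemma trivMat_binary (m n : ℕ) : IsBinary (trivMat m n) := by
  intro i j; unfold trivMat; split_ifs <;> simp

end matrices2
section key
open Finset

variable {E : Type*} [MetricSpace E]

lemma obj_base_nonneg {T nA nB : ℕ} (c p γ : ℝ) (hc : 0 ≤ c) (hγ : 0 ≤ γ)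
    (w1 w2 : ℕ → ℝ) (hw1 : ∀ k < T, 0 ≤ w1 k) (hw2 : ∀ k < T - 1, 0 ≤ w2 k)
    (X : Fin nA → Fin T → Option E) (Y : Fin nB → Fin T → Option E)
    (W : Fin T → Matrix (Fin (nA + 1)) (Fin (nB + 1)) ℝ) (hW : ∀ k i j, 0 ≤ W k i j) :
    0 ≤ ∑ k : Fin T, w1 k.1 * ∑ i, ∑ j, Dmat c p X Y k i j * W k i j +
      γ ^ p / 2 * ∑ k : Fin (T - 1), w2 k.1 *
        ∑ i : Fin nA, ∑ j : Fin nB,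
          |W ⟨k.1, by have := k.2; omega⟩ i.castSucc j.castSucc -
            W ⟨k.1 + 1, by have := k.2; omega⟩ i.castSucc j.castSucc| := by
  have hγp : (0:ℝ) ≤ γ ^ p := Real.rpow_nonneg hγ p
  refine add_nonneg (Finset.sum_nonneg fun k _ => mul_nonneg (hw1 k.1 k.2) ?_)
    (mul_nonneg (by positivity) (Finset.sum_nonneg fun k _ => mul_nonneg (hw2 k.1 k.2) ?_))
  · exact Finset.sum_nonneg fun i _ => Finset.sum_nonneg fun j _ =>
      mul_nonneg (Real.rpow_nonneg (dG_nonneg hc _ _) _) (hW k i j)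
  · exact Finset.sum_nonneg fun i _ => Finset.sum_nonneg fun j _ => abs_nonneg _

/-- Left/right time indices of a switching slot. -/
def kl {T : ℕ} (k : Fin (T-1)) : Fin T := ⟨k.1, by have := k.2; omega⟩
def kr {T : ℕ} (k : Fin (T-1)) : Fin T := ⟨k.1 + 1, by have := k.2; omega⟩

lemma key_ineq {T nX nZ nY : ℕ}
    (c p γ : ℝ) (hc : 0 < c) (hp : 1 ≤ p) (hγ : 0 < γ)
    (w1 w2 : ℕ → ℝ) (hw1 : ∀ k < T, 0 < w1 k) (hw2 : ∀ k < T - 1, 0 < w2 k)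
    (X : Fin nX → Fin T → Option E) (Z : Fin nZ → Fin T → Option E)
    (Y : Fin nY → Fin T → Option E)
    (W : Fin T → Matrix (Fin (nX + 1)) (Fin (nZ + 1)) ℝ)
    (V : Fin T → Matrix (Fin (nZ + 1)) (Fin (nY + 1)) ℝ)
    (hW : ∀ k, Relaxed (W k)) (hV : ∀ k, Relaxed (V k)) :
    obj c p γ w1 w2 X Y (fun k => compM (W k) (V k)) ≤
      obj c p γ w1 w2 X Z W + obj c p γ w1 w2 Z Y V := by
  have hp0 : 0 < p := lt_of_lt_of_le one_pos hp
  have hpne : p ≠ 0 := ne_of_gt hp0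
  have hpinv : (0:ℝ) ≤ 1/p := by positivity
  have hcle : (0:ℝ) ≤ c := hc.le
  have hw1nn : ∀ k : Fin T, 0 ≤ w1 k.1 := fun k => (hw1 k.1 k.2).le
  have hw2nn : ∀ k : Fin (T-1), 0 ≤ w2 k.1 := fun k => (hw2 k.1 k.2).le
  have hγp : (0:ℝ) ≤ γ ^ p := Real.rpow_nonneg hγ.le p
  -- the four component functions
  obtain ⟨fl, hfl⟩ : ∃ fl : Fin T × Fin (nX+1) × Fin (nZ+1) × Fin (nY+1) → ℝ,
      fl = fun q => (w1 q.1.1 * coup (W q.1) (V q.1) q.2.1 q.2.2.1 q.2.2.2) ^ (1/p) *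
        dG c p (extTraj X q.2.1 q.1) (extTraj Z q.2.2.1 q.1) := ⟨_, rfl⟩
  obtain ⟨gl, hgl⟩ : ∃ gl : Fin T × Fin (nX+1) × Fin (nZ+1) × Fin (nY+1) → ℝ,
      gl = fun q => (w1 q.1.1 * coup (W q.1) (V q.1) q.2.1 q.2.2.1 q.2.2.2) ^ (1/p) *
        dG c p (extTraj Z q.2.2.1 q.1) (extTraj Y q.2.2.2 q.1) := ⟨_, rfl⟩
  obtain ⟨fr, hfr⟩ : ∃ fr : Fin (T-1) × Fin nX × Fin nZ × Fin nY → ℝ,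
      fr = fun q => (γ^p * w2 q.1.1 / 2 *
        (|W (kl q.1) q.2.1.castSucc q.2.2.1.castSucc - W (kr q.1) q.2.1.castSucc q.2.2.1.castSucc| *
          V (kl q.1) q.2.2.1.castSucc q.2.2.2.castSucc)) ^ (1/p) := ⟨_, rfl⟩
  obtain ⟨gr, hgr⟩ : ∃ gr : Fin (T-1) × Fin nX × Fin nZ × Fin nY → ℝ,
      gr = fun q => (γ^p * w2 q.1.1 / 2 *
        (W (kr q.1) q.2.1.castSucc q.2.2.1.castSucc *
          |V (kl q.1) q.2.2.1.castSucc q.2.2.2.castSucc - V (kr q.1) q.2.2.1.castSucc q.2.2.2.castSucc|)) ^ (1/p) := ⟨_, rfl⟩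
  -- nonnegativity facts
  have hUnn : ∀ (k : Fin T) i z j, 0 ≤ w1 k.1 * coup (W k) (V k) i z j :=
    fun k i z j => mul_nonneg (hw1nn k) (coup_nonneg (hW k) (hV k) i z j)
  have hfl_nn : ∀ q, 0 ≤ fl q := fun q => by
    rw [hfl]; exact mul_nonneg (Real.rpow_nonneg (hUnn _ _ _ _) _) (dG_nonneg hcle _ _)
  have hgl_nn : ∀ q, 0 ≤ gl q := fun q => by
    rw [hgl]; exact mul_nonneg (Real.rpow_nonneg (hUnn _ _ _ _) _) (dG_nonneg hcle _ _)
  have hfrbase : ∀ (k : Fin (T-1)) (i : Fin nX) (z : Fin nZ) (j : Fin nY),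
      0 ≤ γ^p * w2 k.1 / 2 *
        (|W (kl k) i.castSucc z.castSucc - W (kr k) i.castSucc z.castSucc| *
          V (kl k) z.castSucc j.castSucc) :=
    fun k i z j => mul_nonneg (div_nonneg (mul_nonneg hγp (hw2nn k)) (by norm_num))
      (mul_nonneg (abs_nonneg _) ((hV _).1 _ _))
  have hgrbase : ∀ (k : Fin (T-1)) (i : Fin nX) (z : Fin nZ) (j : Fin nY),
      0 ≤ γ^p * w2 k.1 / 2 *
        (W (kr k) i.castSucc z.castSucc *
          |V (kl k) z.castSucc j.castSucc - V (kr k) z.castSucc j.castSucc|) :=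
    fun k i z j => mul_nonneg (div_nonneg (mul_nonneg hγp (hw2nn k)) (by norm_num))
      (mul_nonneg ((hW _).1 _ _) (abs_nonneg _))
  have hfr_nn : ∀ q, 0 ≤ fr q := fun q => by
    rw [hfr]; exact Real.rpow_nonneg (hfrbase q.1 q.2.1 q.2.2.1 q.2.2.2) _
  have hgr_nn : ∀ q, 0 ≤ gr q := fun q => by
    rw [hgr]; exact Real.rpow_nonneg (hgrbase q.1 q.2.1 q.2.2.1 q.2.2.2) _
  have hf_nn : ∀ t, 0 ≤ Sum.elim fl fr t := fun t => by
    cases t with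
    | inl q => exact hfl_nn q
    | inr q => exact hfr_nn q
  have hg_nn : ∀ t, 0 ≤ Sum.elim gl gr t := fun t => by
    cases t with
    | inl q => exact hgl_nn q
    | inr q => exact hgr_nn q

  -- evaluation of p-th powers
  have hflp : ∀ (k : Fin T) i z j, fl (k,(i,z,j)) ^ p
      = w1 k.1 * coup (W k) (V k) i z j * dG c p (extTraj X i k) (extTraj Z z k) ^ p := by
    intro k i z j
    rw [hfl]
    exact fp_eval (hUnn k i z j) (dG_nonneg hcle _ _) hpne
  have hglp : ∀ (k : Fin T) i z j, gl (k,(i,z,j)) ^ p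
      = w1 k.1 * coup (W k) (V k) i z j * dG c p (extTraj Z z k) (extTraj Y j k) ^ p := by
    intro k i z j
    rw [hgl]
    exact fp_eval (hUnn k i z j) (dG_nonneg hcle _ _) hpne
  have hfrp : ∀ (k : Fin (T-1)) (i : Fin nX) (z : Fin nZ) (j : Fin nY), fr (k,(i,z,j)) ^ p
      = γ^p * w2 k.1 / 2 *
        (|W (kl k) i.castSucc z.castSucc - W (kr k) i.castSucc z.castSucc| *
          V (kl k) z.castSucc j.castSucc) := by
    intro k i z j
    rw [hfr]
    exact rpow_one_div_rpow (hfrbase k i z j) hpne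
  have hgrp : ∀ (k : Fin (T-1)) (i : Fin nX) (z : Fin nZ) (j : Fin nY), gr (k,(i,z,j)) ^ p
      = γ^p * w2 k.1 / 2 *
        (W (kr k) i.castSucc z.castSucc *
          |V (kl k) z.castSucc j.castSucc - V (kr k) z.castSucc j.castSucc|) := by
    intro k i z j
    rw [hgr]
    exact rpow_one_div_rpow (hgrbase k i z j) hpne
  -- partial row/column sums are at most one
  have hVrow : ∀ (k : Fin T) (z : Fin nZ), ∑ j : Fin nY, V k z.castSucc j.castSucc ≤ 1 := by
    intro k z
    have h := (hV k).2.2.1 z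
    rw [Fin.sum_univ_castSucc] at h
    linarith [(hV k).1 z.castSucc (Fin.last nY)]
  have hWcol : ∀ (k : Fin T) (z : Fin nZ), ∑ i : Fin nX, W k i.castSucc z.castSucc ≤ 1 := by
    intro k z
    have h := (hW k).2.1 z
    rw [Fin.sum_univ_castSucc] at h
    linarith [(hW k).1 (Fin.last nX) z.castSucc]
  -- A: the f-side is dominated by the X-Z objective
  have hA : ∑ t, (Sum.elim fl fr t) ^ p ≤
      (∑ k : Fin T, w1 k.1 * ∑ i, ∑ z, Dmat c p X Z k i z * W k i z) +
        γ ^ p / 2 * ∑ k : Fin (T-1), w2 k.1 * ∑ i : Fin nX, ∑ z : Fin nZ,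
          |W (kl k) i.castSucc z.castSucc - W (kr k) i.castSucc z.castSucc| := by
    rw [Fintype.sum_sum_type]
    simp only [Sum.elim_inl, Sum.elim_inr]
    refine add_le_add ?_ ?_
    · simp only [Fintype.sum_prod_type]
      refine Finset.sum_le_sum fun k _ => ?_
      rw [Finset.mul_sum]
      refine Finset.sum_le_sum fun i _ => ?_
      rw [Finset.mul_sum]
      refine Finset.sum_le_sum fun z _ => ?_
      have hstep : ∑ j, fl (k,(i,z,j)) ^ p
          = (w1 k.1 * ∑ j, coup (W k) (V k) i z j) *
              dG c p (extTraj X i k) (extTraj Z z k) ^ p := by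
        rw [Finset.mul_sum, Finset.sum_mul]
        exact Finset.sum_congr rfl fun j _ => by rw [hflp k i z j]
      rw [hstep]
      by_cases hiz : i = Fin.last nX ∧ z = Fin.last nZ
      · have hdz : dG c p (extTraj X i k) (extTraj Z z k) = 0 := by
          rw [hiz.1, hiz.2]; simp [extTraj, dG]
        have hD : Dmat c p X Z k i z = 0 := by
          show dG c p (extTraj X i k) (extTraj Z z k) ^ p = 0
          rw [hdz]; exact Real.zero_rpow hpne
        rw [hdz, hD, Real.zero_rpow hpne]
        simp
      · have hco := sum_coup_j (hW k) (hV k) i z hiz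
        have hd : (0:ℝ) ≤ dG c p (extTraj X i k) (extTraj Z z k) ^ p :=
          Real.rpow_nonneg (dG_nonneg hcle _ _) _
        calc (w1 k.1 * ∑ j, coup (W k) (V k) i z j) *
              dG c p (extTraj X i k) (extTraj Z z k) ^ p
            ≤ (w1 k.1 * W k i z) * dG c p (extTraj X i k) (extTraj Z z k) ^ p :=
              mul_le_mul_of_nonneg_right (mul_le_mul_of_nonneg_left hco (hw1nn k)) hd
          _ = w1 k.1 * (Dmat c p X Z k i z * W k i z) := by
              show _ = w1 k.1 * (dG c p (extTraj X i k) (extTraj Z z k) ^ p * W k i z)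
              ring
    · simp only [Finset.mul_sum, Fintype.sum_prod_type]
      refine Finset.sum_le_sum fun k _ => ?_
      refine Finset.sum_le_sum fun i _ => ?_
      refine Finset.sum_le_sum fun z _ => ?_
      have hnn : (0:ℝ) ≤ γ^p * w2 k.1 / 2 *
          |W (kl k) i.castSucc z.castSucc - W (kr k) i.castSucc z.castSucc| :=
        mul_nonneg (div_nonneg (mul_nonneg hγp (hw2nn k)) (by norm_num)) (abs_nonneg _)
      calc ∑ j : Fin nY, fr (k,(i,z,j)) ^ p
          = (γ^p * w2 k.1 / 2 *
              |W (kl k) i.castSucc z.castSucc - W (kr k) i.castSucc z.castSucc|) *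
              ∑ j : Fin nY, V (kl k) z.castSucc j.castSucc := by
            rw [Finset.mul_sum]
            exact Finset.sum_congr rfl fun j _ => by rw [hfrp k i z j]; ring
        _ ≤ (γ^p * w2 k.1 / 2 *
              |W (kl k) i.castSucc z.castSucc - W (kr k) i.castSucc z.castSucc|) * 1 :=
            mul_le_mul_of_nonneg_left (hVrow (kl k) z) hnn
        _ = γ^p / 2 * (w2 k.1 *
              |W (kl k) i.castSucc z.castSucc - W (kr k) i.castSucc z.castSucc|) := by ring

  have hcomm3 : ∀ {n1 n2 n3 : ℕ} (F : Fin n1 → Fin n2 → Fin n3 → ℝ),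
      (∑ a, ∑ b, ∑ c, F a b c) = ∑ b, ∑ c, ∑ a, F a b c := by
    intro n1 n2 n3 F
    rw [Finset.sum_comm]
    exact Finset.sum_congr rfl fun b _ => Finset.sum_comm
  -- B: the g-side is dominated by the Z-Y objective
  have hB : ∑ t, (Sum.elim gl gr t) ^ p ≤
      (∑ k : Fin T, w1 k.1 * ∑ z, ∑ j, Dmat c p Z Y k z j * V k z j) +
        γ ^ p / 2 * ∑ k : Fin (T-1), w2 k.1 * ∑ z : Fin nZ, ∑ j : Fin nY,
          |V (kl k) z.castSucc j.castSucc - V (kr k) z.castSucc j.castSucc| := by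
    rw [Fintype.sum_sum_type]
    simp only [Sum.elim_inl, Sum.elim_inr]
    refine add_le_add ?_ ?_
    · simp only [Fintype.sum_prod_type]
      refine Finset.sum_le_sum fun k _ => ?_
      rw [hcomm3]
      rw [Finset.mul_sum]
      refine Finset.sum_le_sum fun z _ => ?_
      rw [Finset.mul_sum]
      refine Finset.sum_le_sum fun j _ => ?_
      have hstep : ∑ i, gl (k,(i,z,j)) ^ p
          = (w1 k.1 * ∑ i, coup (W k) (V k) i z j) *
              dG c p (extTraj Z z k) (extTraj Y j k) ^ p := by
        rw [Finset.mul_sum, Finset.sum_mul]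
        exact Finset.sum_congr rfl fun i _ => by rw [hglp k i z j]
      rw [hstep]
      by_cases hzj : z = Fin.last nZ ∧ j = Fin.last nY
      · have hdz : dG c p (extTraj Z z k) (extTraj Y j k) = 0 := by
          rw [hzj.1, hzj.2]; simp [extTraj, dG]
        have hD : Dmat c p Z Y k z j = 0 := by
          show dG c p (extTraj Z z k) (extTraj Y j k) ^ p = 0
          rw [hdz]; exact Real.zero_rpow hpne
        rw [hdz, hD, Real.zero_rpow hpne]
        simp
      · have hco := sum_coup_i (hW k) (hV k) z j hzj
        have hd : (0:ℝ) ≤ dG c p (extTraj Z z k) (extTraj Y j k) ^ p :=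
          Real.rpow_nonneg (dG_nonneg hcle _ _) _
        calc (w1 k.1 * ∑ i, coup (W k) (V k) i z j) *
              dG c p (extTraj Z z k) (extTraj Y j k) ^ p
            ≤ (w1 k.1 * V k z j) * dG c p (extTraj Z z k) (extTraj Y j k) ^ p :=
              mul_le_mul_of_nonneg_right (mul_le_mul_of_nonneg_left hco (hw1nn k)) hd
          _ = w1 k.1 * (Dmat c p Z Y k z j * V k z j) := by
              show _ = w1 k.1 * (dG c p (extTraj Z z k) (extTraj Y j k) ^ p * V k z j)
              ring
    · simp only [Finset.mul_sum, Fintype.sum_prod_type]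
      refine Finset.sum_le_sum fun k _ => ?_
      rw [hcomm3]
      refine Finset.sum_le_sum fun z _ => ?_
      refine Finset.sum_le_sum fun j _ => ?_
      have hnn : (0:ℝ) ≤ γ^p * w2 k.1 / 2 *
          |V (kl k) z.castSucc j.castSucc - V (kr k) z.castSucc j.castSucc| :=
        mul_nonneg (div_nonneg (mul_nonneg hγp (hw2nn k)) (by norm_num)) (abs_nonneg _)
      calc ∑ i : Fin nX, gr (k,(i,z,j)) ^ p
          = (γ^p * w2 k.1 / 2 *
              |V (kl k) z.castSucc j.castSucc - V (kr k) z.castSucc j.castSucc|) *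
              ∑ i : Fin nX, W (kr k) i.castSucc z.castSucc := by
            rw [Finset.mul_sum]
            exact Finset.sum_congr rfl fun i _ => by rw [hgrp k i z j]; ring
        _ ≤ (γ^p * w2 k.1 / 2 *
              |V (kl k) z.castSucc j.castSucc - V (kr k) z.castSucc j.castSucc|) * 1 :=
            mul_le_mul_of_nonneg_left (hWcol (kr k) z) hnn
        _ = γ^p / 2 * (w2 k.1 *
              |V (kl k) z.castSucc j.castSucc - V (kr k) z.castSucc j.castSucc|) := by ring

  -- C: the composed objective base is dominated by the Minkowski sum
  have hC : (∑ k : Fin T, w1 k.1 * ∑ i, ∑ j, Dmat c p X Y k i j * compM (W k) (V k) i j) +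
      γ ^ p / 2 * ∑ k : Fin (T-1), w2 k.1 * ∑ i : Fin nX, ∑ j : Fin nY,
        |compM (W (kl k)) (V (kl k)) i.castSucc j.castSucc -
          compM (W (kr k)) (V (kr k)) i.castSucc j.castSucc|
      ≤ ∑ t, (Sum.elim fl fr t + Sum.elim gl gr t) ^ p := by
    rw [Fintype.sum_sum_type]
    simp only [Sum.elim_inl, Sum.elim_inr]
    refine add_le_add ?_ ?_
    · simp only [Finset.mul_sum, Fintype.sum_prod_type]
      refine Finset.sum_le_sum fun k _ => ?_
      refine Finset.sum_le_sum fun i _ => ?_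
      rw [Finset.sum_comm]
      refine Finset.sum_le_sum fun j _ => ?_
      have hd : (0:ℝ) ≤ dG c p (extTraj X i k) (extTraj Y j k) ^ p :=
        Real.rpow_nonneg (dG_nonneg hcle _ _) _
      have hev : ∀ z, (fl (k,(i,z,j)) + gl (k,(i,z,j))) ^ p
          = w1 k.1 * coup (W k) (V k) i z j *
            (dG c p (extTraj X i k) (extTraj Z z k) +
              dG c p (extTraj Z z k) (extTraj Y j k)) ^ p := by
        intro z
        rw [hfl, hgl]
        show ((w1 k.1 * coup (W k) (V k) i z j) ^ (1/p) * dG c p (extTraj X i k) (extTraj Z z k) +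
              (w1 k.1 * coup (W k) (V k) i z j) ^ (1/p) *
                dG c p (extTraj Z z k) (extTraj Y j k)) ^ p = _
        rw [← mul_add]
        exact fp_eval (hUnn k i z j) (add_nonneg (dG_nonneg hcle _ _) (dG_nonneg hcle _ _)) hpne
      calc w1 k.1 * (Dmat c p X Y k i j * compM (W k) (V k) i j)
          = (w1 k.1 * compM (W k) (V k) i j) * dG c p (extTraj X i k) (extTraj Y j k) ^ p := by
            show w1 k.1 * (dG c p (extTraj X i k) (extTraj Y j k) ^ p * compM (W k) (V k) i j) = _
            ring
        _ ≤ (w1 k.1 * ∑ z, coup (W k) (V k) i z j) *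
              dG c p (extTraj X i k) (extTraj Y j k) ^ p :=
            mul_le_mul_of_nonneg_right
              (mul_le_mul_of_nonneg_left (compM_le_sum_coup (hW k) (hV k) i j) (hw1nn k)) hd
        _ = ∑ z, w1 k.1 * coup (W k) (V k) i z j *
              dG c p (extTraj X i k) (extTraj Y j k) ^ p := by
            rw [Finset.mul_sum, Finset.sum_mul]
        _ ≤ ∑ z, (fl (k,(i,z,j)) + gl (k,(i,z,j))) ^ p := by
            refine Finset.sum_le_sum fun z _ => ?_
            rw [hev z]
            exact mul_le_mul_of_nonneg_left
              (Real.rpow_le_rpow (dG_nonneg hcle _ _) (dG_triangle hcle hp _ _ _) hp0.le)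
              (hUnn k i z j)
    · simp only [Finset.mul_sum, Fintype.sum_prod_type]
      refine Finset.sum_le_sum fun k _ => ?_
      refine Finset.sum_le_sum fun i _ => ?_
      rw [Finset.sum_comm]
      refine Finset.sum_le_sum fun j _ => ?_
      have hid : compM (W (kl k)) (V (kl k)) i.castSucc j.castSucc -
          compM (W (kr k)) (V (kr k)) i.castSucc j.castSucc
          = ∑ z : Fin nZ, (W (kl k) i.castSucc z.castSucc * V (kl k) z.castSucc j.castSucc -
              W (kr k) i.castSucc z.castSucc * V (kr k) z.castSucc j.castSucc) := by
        rw [compM_inner, compM_inner, Finset.sum_sub_distrib]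
      have habs : |compM (W (kl k)) (V (kl k)) i.castSucc j.castSucc -
          compM (W (kr k)) (V (kr k)) i.castSucc j.castSucc|
          ≤ ∑ z : Fin nZ,
              (|W (kl k) i.castSucc z.castSucc - W (kr k) i.castSucc z.castSucc| *
                V (kl k) z.castSucc j.castSucc +
              W (kr k) i.castSucc z.castSucc *
                |V (kl k) z.castSucc j.castSucc - V (kr k) z.castSucc j.castSucc|) := by
        rw [hid]
        refine (Finset.abs_sum_le_sum_abs _ _).trans (Finset.sum_le_sum fun z _ => ?_)
        have hsplit : W (kl k) i.castSucc z.castSucc * V (kl k) z.castSucc j.castSucc -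
            W (kr k) i.castSucc z.castSucc * V (kr k) z.castSucc j.castSucc
            = (W (kl k) i.castSucc z.castSucc - W (kr k) i.castSucc z.castSucc) *
                V (kl k) z.castSucc j.castSucc +
              W (kr k) i.castSucc z.castSucc *
                (V (kl k) z.castSucc j.castSucc - V (kr k) z.castSucc j.castSucc) := by ring
        rw [hsplit]
        refine (abs_add_le _ _).trans ?_
        rw [abs_mul, abs_mul, abs_of_nonneg ((hV (kl k)).1 _ _), abs_of_nonneg ((hW (kr k)).1 _ _)]
      have hcnn : (0:ℝ) ≤ γ^p/2 := by positivity
      calc γ^p/2 * (w2 k.1 * |compM (W (kl k)) (V (kl k)) i.castSucc j.castSucc -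
            compM (W (kr k)) (V (kr k)) i.castSucc j.castSucc|)
          ≤ γ^p/2 * (w2 k.1 * ∑ z : Fin nZ,
              (|W (kl k) i.castSucc z.castSucc - W (kr k) i.castSucc z.castSucc| *
                V (kl k) z.castSucc j.castSucc +
              W (kr k) i.castSucc z.castSucc *
                |V (kl k) z.castSucc j.castSucc - V (kr k) z.castSucc j.castSucc|)) :=
            mul_le_mul_of_nonneg_left (mul_le_mul_of_nonneg_left habs (hw2nn k)) hcnn
        _ = ∑ z : Fin nZ,
              (γ^p * w2 k.1 / 2 *
                (|W (kl k) i.castSucc z.castSucc - W (kr k) i.castSucc z.castSucc| *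
                  V (kl k) z.castSucc j.castSucc) +
              γ^p * w2 k.1 / 2 *
                (W (kr k) i.castSucc z.castSucc *
                  |V (kl k) z.castSucc j.castSucc - V (kr k) z.castSucc j.castSucc|)) := by
            rw [Finset.mul_sum, Finset.mul_sum]
            exact Finset.sum_congr rfl fun z _ => by ring
        _ ≤ ∑ z : Fin nZ, (fr (k,(i,z,j)) + gr (k,(i,z,j))) ^ p := by
            refine Finset.sum_le_sum fun z _ => ?_
            rw [← hfrp k i z j, ← hgrp k i z j]
            exact real_add_pow_le (hfr_nn _) (hgr_nn _) hp
  -- nonnegativity of the sums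
  have hA0 : 0 ≤ ∑ t, (Sum.elim fl fr t) ^ p :=
    Finset.sum_nonneg fun t _ => Real.rpow_nonneg (hf_nn t) _
  have hB0 : 0 ≤ ∑ t, (Sum.elim gl gr t) ^ p :=
    Finset.sum_nonneg fun t _ => Real.rpow_nonneg (hg_nn t) _
  have hM0 : 0 ≤ (∑ k : Fin T, w1 k.1 * ∑ i, ∑ j, Dmat c p X Y k i j * compM (W k) (V k) i j) +
      γ ^ p / 2 * ∑ k : Fin (T-1), w2 k.1 * ∑ i : Fin nX, ∑ j : Fin nY,
        |compM (W (kl k)) (V (kl k)) i.castSucc j.castSucc -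
          compM (W (kr k)) (V (kr k)) i.castSucc j.castSucc| :=
    obj_base_nonneg c p γ hcle hγ.le w1 w2 (fun k hk => (hw1 k hk).le)
      (fun k hk => (hw2 k hk).le) X Y (fun k => compM (W k) (V k))
      (fun k i j => (compM_relaxed (hW k) (hV k)).1 i j)
  calc obj c p γ w1 w2 X Y (fun k => compM (W k) (V k))
      ≤ (∑ t, (Sum.elim fl fr t + Sum.elim gl gr t) ^ p) ^ (1/p) :=
        Real.rpow_le_rpow hM0 hC hpinv
    _ ≤ (∑ t, (Sum.elim fl fr t) ^ p) ^ (1/p) + (∑ t, (Sum.elim gl gr t) ^ p) ^ (1/p) :=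
        Real.Lp_add_le_of_nonneg (s := Finset.univ) hp (fun t _ => hf_nn t) (fun t _ => hg_nn t)
    _ ≤ obj c p γ w1 w2 X Z W + obj c p γ w1 w2 Z Y V :=
        add_le_add (Real.rpow_le_rpow hA0 hA hpinv) (Real.rpow_le_rpow hB0 hB hpinv)

end key

/-- The time-weighted multi-dimensional assignment metric satisfies the triangle
inequality. -/
theorem dmd_triangle {E : Type*} [MetricSpace E] {T nX nZ nY : ℕ}
    (c p γ : ℝ) (hc : 0 < c) (hp : 1 ≤ p) (hγ : 0 < γ)
    (w1 w2 : ℕ → ℝ) (hw1 : ∀ k < T, 0 < w1 k) (hw2 : ∀ k < T - 1, 0 < w2 k)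
    (X : Fin nX → Fin T → Option E) (Z : Fin nZ → Fin T → Option E)
    (Y : Fin nY → Fin T → Option E) :
    dmd c p γ w1 w2 X Y ≤ dmd c p γ w1 w2 X Z + dmd c p γ w1 w2 Z Y := by
  haveI h1 : Nonempty {W : Fin T → Matrix (Fin (nX + 1)) (Fin (nZ + 1)) ℝ //
      ∀ k, Relaxed (W k) ∧ IsBinary (W k)} :=
    ⟨⟨fun _ => trivMat nX nZ, fun _ => ⟨trivMat_relaxed _ _, trivMat_binary _ _⟩⟩⟩
  haveI h2 : Nonempty {V : Fin T → Matrix (Fin (nZ + 1)) (Fin (nY + 1)) ℝ //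
      ∀ k, Relaxed (V k) ∧ IsBinary (V k)} :=
    ⟨⟨fun _ => trivMat nZ nY, fun _ => ⟨trivMat_relaxed _ _, trivMat_binary _ _⟩⟩⟩
  have hbdd : BddBelow (Set.range fun (Mp : {M : Fin T → Matrix (Fin (nX + 1)) (Fin (nY + 1)) ℝ //
      ∀ k, Relaxed (M k) ∧ IsBinary (M k)}) => obj c p γ w1 w2 X Y Mp.1) := by
    refine ⟨0, ?_⟩
    rintro x ⟨Mp, rfl⟩
    exact Real.rpow_nonneg (obj_base_nonneg c p γ hc.le hγ.le w1 w2
      (fun k hk => (hw1 k hk).le) (fun k hk => (hw2 k hk).le) X Y Mp.1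
      (fun k i j => (Mp.2 k).1.1 i j)) _
  unfold dmd
  refine le_ciInf_add_ciInf ?_
  intro Wp Vp
  refine le_trans (ciInf_le hbdd ⟨fun k => compM (Wp.1 k) (Vp.1 k), fun k =>
    ⟨compM_relaxed (Wp.2 k).1 (Vp.2 k).1,
      compM_binary (Wp.2 k).1 (Vp.2 k).1 (Wp.2 k).2 (Vp.2 k).2⟩⟩) ?_
  exact key_ineq c p γ hc hp hγ w1 w2 hw1 hw2 X Z Y Wp.1 Vp.1
    (fun k => (Wp.2 k).1) (fun k => (Vp.2 k).1)
end
end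

section
/- With the standing setup, define for each time step k the GOSPA cost GOSPA_k(X, Y)^p = min over assignment sets θ (sets of pairs (i,j) with 1 ≤ i ≤ nX, 1 ≤ j ≤ nY, X_i(k) ≠ none, Y_j(k) ≠ none, such that each i and each j appears in at most one pair of θ) of [ Σ_{(i,j) ∈ θ} d_b(x_i^k, y_j^k)^p + (c^p/2)(|τ^k(X)| + |τ^k(Y)| − 2|θ|) ], where x_i^k and y_j^k denote the states with X_i(k) = some x_i^k and Y_j(k) = some y_j^k, and |τ^k(X)| is the number of indices i with X_i(k) ≠ none. Define d^0(X, Y) = ( Σ_{k=1}^{T} w1(k) · GOSPA_k(X, Y)^p )^(1/p). Then d^0(X, Y) ≤ d̄(X, Y), where d̄(X, Y) is the time-weighted LP trajectory metric (the infimum of the objective c(X, Y, W^{1:T}) over sequences of matrices satisfying the relaxed assignment constraints). -/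
open Finset

noncomputable section

/-- Distance between the states of two present targets (junk value `0` otherwise). -/
def optDist {E : Type*} [MetricSpace E] : Option E → Option E → ℝ
  | some x, some y => dist x y
  | _, _ => 0

/-- A valid GOSPA assignment set at time `k`: a set of pairs of indices of targets that
exist at time `k`, in which every index appears at most once. -/
def ValidTheta {E : Type*} {T nX nY : ℕ} (X : Fin nX → Fin T → Option E)
    (Y : Fin nY → Fin T → Option E) (k : Fin T) (θ : Finset (Fin nX × Fin nY)) : Prop :=
  (∀ q ∈ θ, X q.1 k ≠ none ∧ Y q.2 k ≠ none) ∧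
  (∀ q ∈ θ, ∀ q' ∈ θ, (q.1 = q'.1 ∨ q.2 = q'.2) → q = q')

/-- `|τ^k(X)|`: the number of targets present at time `k`. -/
def tauCard {E : Type*} {T n : ℕ} (X : Fin n → Fin T → Option E) (k : Fin T) : ℕ :=
  (Finset.univ.filter (fun i => (X i k).isSome)).card

/-- The GOSPA cost (to the `p`-th power) at time step `k`. -/
def gospaP {E : Type*} [MetricSpace E] (c p : ℝ) {T nX nY : ℕ}
    (X : Fin nX → Fin T → Option E) (Y : Fin nY → Fin T → Option E) (k : Fin T) : ℝ :=
  sInf {r | ∃ θ : Finset (Fin nX × Fin nY), ValidTheta X Y k θ ∧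
    r = ∑ q ∈ θ, optDist (X q.1 k) (Y q.2 k) ^ p +
      c ^ p / 2 * ((tauCard X k : ℝ) + (tauCard Y k : ℝ) - 2 * (θ.card : ℝ))}

/-- `d^0`: the `p`-th root of the time-weighted sum of the GOSPA costs to the `p`-th power. -/
def d0 {E : Type*} [MetricSpace E] (c p : ℝ) (w1 : ℕ → ℝ) {T nX nY : ℕ}
    (X : Fin nX → Fin T → Option E) (Y : Fin nY → Fin T → Option E) : ℝ :=
  (∑ k : Fin T, w1 k.1 * gospaP c p X Y k) ^ (1 / p)


-- ===== Auxiliary lemmas =====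

/-- A fractional matching is dominated by some integral matching (via Birkhoff's theorem). -/
lemma fracMatching {ι κ : Type*} [Fintype ι] [Fintype κ] [DecidableEq ι] [DecidableEq κ]
    (a W : ι → κ → ℝ) (hW : ∀ i j, 0 ≤ W i j)
    (hrow : ∀ i, ∑ j, W i j ≤ 1) (hcol : ∀ j, ∑ i, W i j ≤ 1) :
    ∃ θ : Finset (ι × κ),
      (∀ q ∈ θ, ∀ q' ∈ θ, q.1 = q'.1 ∨ q.2 = q'.2 → q = q') ∧
      ∑ i, ∑ j, a i j * W i j ≤ ∑ q ∈ θ, a q.1 q.2 := by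
  classical
  set M : Matrix (ι ⊕ κ) (ι ⊕ κ) ℝ := fun r s =>
    match r, s with
    | .inl i, .inr j => W i j
    | .inl i, .inl i' => if i = i' then 1 - ∑ j, W i j else 0
    | .inr j, .inl i => W i j
    | .inr j, .inr j' => if j = j' then 1 - ∑ i, W i j else 0
    with hM
  have hMds : M ∈ doublyStochastic ℝ (ι ⊕ κ) := by
    rw [mem_doublyStochastic_iff_sum]
    refine ⟨?_, ?_, ?_⟩
    · rintro (i | j) (i' | j') <;> simp only [hM]
      · split <;> simp [sub_nonneg, hrow, *]
      · exact hW _ _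
      · exact hW _ _
      · split <;> simp [sub_nonneg, hcol, *]
    · rintro (i | j) <;>
        simp [hM, Fintype.sum_sum_type, Finset.sum_ite_eq, Finset.sum_ite_eq']
    · rintro (i | j) <;>
        simp [hM, Fintype.sum_sum_type, Finset.sum_ite_eq, Finset.sum_ite_eq']
  obtain ⟨w, hw0, hw1, hwM⟩ := exists_eq_sum_perm_of_mem_doublyStochastic hMds
  set g : Equiv.Perm (ι ⊕ κ) → ℝ :=
    fun σ => ∑ i, ∑ j, a i j * (σ.permMatrix ℝ) (Sum.inl i) (Sum.inr j) with hg
  set S := ∑ i, ∑ j, a i j * W i j with hS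
  have hdecomp : S = ∑ σ, w σ * g σ := by
    have hMe : ∀ i j, W i j = ∑ σ, w σ * (σ.permMatrix ℝ) (Sum.inl i) (Sum.inr j) := by
      intro i j
      have h := congrFun (congrFun hwM (Sum.inl i)) (Sum.inr j)
      simp only [Matrix.sum_apply, Matrix.smul_apply, smul_eq_mul] at h
      exact h.symm
    have swap : ∑ σ, w σ * g σ =
        ∑ i, ∑ j, ∑ σ, w σ * (a i j * (σ.permMatrix ℝ) (Sum.inl i) (Sum.inr j)) := by
      simp_rw [hg, Finset.mul_sum]
      exact Finset.sum_comm.trans (Finset.sum_congr rfl fun i _ => Finset.sum_comm)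
    rw [hS, swap]
    refine Finset.sum_congr rfl fun i _ => Finset.sum_congr rfl fun j _ => ?_
    rw [hMe i j, Finset.mul_sum]
    exact Finset.sum_congr rfl fun σ _ => by ring
  have hexists : ∃ σ, S ≤ g σ := by
    by_contra h
    push_neg at h
    obtain ⟨σ0, hσ0⟩ : ∃ σ0, 0 < w σ0 := by
      by_contra h'
      push_neg at h'
      have : ∀ σ, w σ = 0 := fun σ => le_antisymm (h' σ) (hw0 σ)
      simp [this] at hw1
    have : ∑ σ, w σ * g σ < ∑ σ, w σ * S := by
      refine Finset.sum_lt_sum (fun σ _ => mul_le_mul_of_nonneg_left (h σ).le (hw0 σ))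
        ⟨σ0, Finset.mem_univ _, mul_lt_mul_of_pos_left (h σ0) hσ0⟩
    rw [← Finset.sum_mul, hw1, one_mul, ← hdecomp] at this
    exact lt_irrefl _ this
  obtain ⟨σ, hσ⟩ := hexists
  refine ⟨Finset.univ.filter (fun q : ι × κ => σ (Sum.inl q.1) = Sum.inr q.2), ?_, ?_⟩
  · intro q hq q' hq' hor
    simp only [Finset.mem_filter] at hq hq'
    rcases hor with h1 | h2
    · have : Sum.inr q.2 = (Sum.inr q'.2 : ι ⊕ κ) := by rw [← hq.2, ← hq'.2, h1]
      exact Prod.ext h1 (by simpa using this)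
    · have : σ (Sum.inl q.1) = σ (Sum.inl q'.1) := by rw [hq.2, hq'.2, h2]
      exact Prod.ext (by simpa using σ.injective this) h2
  · refine hσ.trans_eq ?_
    have : g σ = ∑ i, ∑ j, if σ (Sum.inl i) = Sum.inr j then a i j else 0 := by
      rw [hg]
      refine Finset.sum_congr rfl fun i _ => Finset.sum_congr rfl fun j _ => ?_
      simp [Equiv.Perm.permMatrix, PEquiv.toMatrix_apply, Equiv.toPEquiv_apply, eq_comm,
        mul_ite]
    rw [this, Finset.sum_filter, Fintype.sum_prod_type]

lemma card_le_tauCards {E : Type*} {T nX nY : ℕ} {X : Fin nX → Fin T → Option E}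
    {Y : Fin nY → Fin T → Option E} {k : Fin T} {θ : Finset (Fin nX × Fin nY)}
    (hθ : ValidTheta X Y k θ) : θ.card ≤ tauCard X k ∧ θ.card ≤ tauCard Y k := by
  classical
  constructor
  · have h1 : θ.card = (θ.image Prod.fst).card :=
      (Finset.card_image_of_injOn fun q hq q' hq' h => hθ.2 q hq q' hq' (Or.inl h)).symm
    rw [h1, tauCard]
    refine Finset.card_le_card fun i hi => ?_
    obtain ⟨q, hq, rfl⟩ := Finset.mem_image.1 hi
    exact Finset.mem_filter.2 ⟨Finset.mem_univ _, Option.isSome_iff_ne_none.2 (hθ.1 q hq).1⟩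
  · have h1 : θ.card = (θ.image Prod.snd).card :=
      (Finset.card_image_of_injOn fun q hq q' hq' h => hθ.2 q hq q' hq' (Or.inr h)).symm
    rw [h1, tauCard]
    refine Finset.card_le_card fun j hj => ?_
    obtain ⟨q, hq, rfl⟩ := Finset.mem_image.1 hj
    exact Finset.mem_filter.2 ⟨Finset.mem_univ _, Option.isSome_iff_ne_none.2 (hθ.1 q hq).2⟩

lemma gospa_set_nonneg {E : Type*} [MetricSpace E] {T nX nY : ℕ}
    {c p : ℝ} (hc : 0 < c) (hp : 1 ≤ p)
    (X : Fin nX → Fin T → Option E) (Y : Fin nY → Fin T → Option E) (k : Fin T) :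
    ∀ r ∈ {r | ∃ θ : Finset (Fin nX × Fin nY), ValidTheta X Y k θ ∧
      r = ∑ q ∈ θ, optDist (X q.1 k) (Y q.2 k) ^ p +
        c ^ p / 2 * ((tauCard X k : ℝ) + (tauCard Y k : ℝ) - 2 * (θ.card : ℝ))}, 0 ≤ r := by
  rintro r ⟨θ, hθ, rfl⟩
  obtain ⟨h1, h2⟩ := card_le_tauCards hθ
  have hs : 0 ≤ ∑ q ∈ θ, optDist (X q.1 k) (Y q.2 k) ^ p := by
    refine Finset.sum_nonneg fun q _ => Real.rpow_nonneg ?_ _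
    rcases X q.1 k with _ | x <;> rcases Y q.2 k with _ | y <;>
      simp [optDist, dist_nonneg]
  have hcp : (0:ℝ) ≤ c ^ p / 2 :=
    div_nonneg (Real.rpow_nonneg hc.le _) (by norm_num)
  have hτ : (0:ℝ) ≤ (tauCard X k : ℝ) + (tauCard Y k : ℝ) - 2 * (θ.card : ℝ) := by
    have h1' : (θ.card : ℝ) ≤ (tauCard X k : ℝ) := Nat.cast_le.2 h1
    have h2' : (θ.card : ℝ) ≤ (tauCard Y k : ℝ) := Nat.cast_le.2 h2
    linarith
  nlinarith [mul_nonneg hcp hτ]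

lemma extTraj_castSucc {E : Type*} {T n : ℕ} (X : Fin n → Fin T → Option E) (i : Fin n) :
    extTraj X i.castSucc = X i := by
  simp [extTraj, i.isLt]

lemma extTraj_last {E : Type*} {T n : ℕ} (X : Fin n → Fin T → Option E) :
    extTraj X (Fin.last n) = fun _ => none := by
  simp [extTraj]

lemma step_le {E : Type*} [MetricSpace E] {T nX nY : ℕ}
    {c p : ℝ} (hc : 0 < c) (hp : 1 ≤ p)
    (X : Fin nX → Fin T → Option E) (Y : Fin nY → Fin T → Option E) (k : Fin T)
    (W : Matrix (Fin (nX + 1)) (Fin (nY + 1)) ℝ) (hW : Relaxed W) :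
    gospaP c p X Y k ≤ ∑ i, ∑ j, Dmat c p X Y k i j * W i j := by
  classical
  obtain ⟨hW0, hWcol, hWrow, hWcorner⟩ := hW
  have hp0 : 0 < p := lt_of_lt_of_le one_pos hp
  have hhalf : (c / 2 ^ (1 / p)) ^ p = c ^ p / 2 := by
    rw [Real.div_rpow hc.le (Real.rpow_nonneg (by norm_num) _), ← Real.rpow_mul (by norm_num),
      one_div_mul_cancel hp0.ne', Real.rpow_one]
  have hhalf' : (c / 2 ^ p⁻¹) ^ p = c ^ p / 2 := by rw [← one_div]; exact hhalf
  set χX : Fin nX → ℝ := fun i => if (X i k).isSome then 1 else 0 with hχX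
  set χY : Fin nY → ℝ := fun j => if (Y j k).isSome then 1 else 0 with hχY
  set a : Fin nX → Fin nY → ℝ :=
    fun i j => c ^ p / 2 * (χX i + χY j) - dG c p (X i k) (Y j k) ^ p with ha
  -- pointwise facts
  have ha0 : ∀ i j, 0 ≤ a i j := by
    intro i j
    rcases hXi : X i k with _ | x <;> rcases hYj : Y j k with _ | y <;>
      simp only [ha, hχX, hχY, hXi, hYj, dG, Option.isSome_none, Option.isSome_some,
        if_true, if_false, Bool.false_eq_true, hhalf, Real.zero_rpow hp0.ne']
    · norm_num
    · norm_num
    · norm_num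
    · have hmin : (0:ℝ) ≤ min c (dist x y) := le_min hc.le dist_nonneg
      have : min c (dist x y) ^ p ≤ c ^ p :=
        Real.rpow_le_rpow hmin (min_le_left _ _) hp0.le
      nlinarith
  have hanone : ∀ i j, X i k = none ∨ Y j k = none → a i j = 0 := by
    intro i j hij
    rcases hij with hX | hY
    · rcases hYj : Y j k with _ | y <;>
        simp [ha, hχX, hχY, hX, hYj, dG, Real.zero_rpow hp0.ne', hhalf, hhalf']
    · rcases hXi : X i k with _ | x <;>
        simp [ha, hχX, hχY, hXi, hY, dG, Real.zero_rpow hp0.ne', hhalf, hhalf']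
  -- row/column sums
  have hrowfull : ∀ i : Fin nX,
      (∑ j : Fin nY, W i.castSucc j.castSucc) + W i.castSucc (Fin.last nY) = 1 := by
    intro i; rw [← hWrow i, Fin.sum_univ_castSucc]
  have hcolfull : ∀ j : Fin nY,
      (∑ i : Fin nX, W i.castSucc j.castSucc) + W (Fin.last nX) j.castSucc = 1 := by
    intro j; rw [← hWcol j, Fin.sum_univ_castSucc]
  -- tau as sums of indicators
  have hτX : ((tauCard X k : ℝ)) = ∑ i, χX i := by
    rw [tauCard]; rw [Finset.sum_boole]
  have hτY : ((tauCard Y k : ℝ)) = ∑ j, χY j := by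
    rw [tauCard]; rw [Finset.sum_boole]
  -- Dmat entries
  have hD1 : ∀ (i : Fin nX) (j : Fin nY),
      Dmat c p X Y k i.castSucc j.castSucc = c ^ p / 2 * (χX i + χY j) - a i j := by
    intro i j
    rw [Dmat, extTraj_castSucc, extTraj_castSucc, ha]; ring
  have hD2 : ∀ i : Fin nX,
      Dmat c p X Y k i.castSucc (Fin.last nY) = c ^ p / 2 * χX i := by
    intro i
    rw [Dmat, extTraj_castSucc, extTraj_last]
    rcases hXi : X i k with _ | x <;>
      simp [hχX, hXi, dG, hhalf, hhalf', Real.zero_rpow hp0.ne']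
  have hD3 : ∀ j : Fin nY,
      Dmat c p X Y k (Fin.last nX) j.castSucc = c ^ p / 2 * χY j := by
    intro j
    rw [Dmat, extTraj_castSucc, extTraj_last]
    rcases hYj : Y j k with _ | y <;>
      simp [hχY, hYj, dG, hhalf, hhalf', Real.zero_rpow hp0.ne']
  have hD4 : Dmat c p X Y k (Fin.last nX) (Fin.last nY) = 0 := by
    rw [Dmat, extTraj_last, extTraj_last]
    simp [dG, Real.zero_rpow hp0.ne']
  -- the big identity
  have hSid : ∑ i, ∑ j, Dmat c p X Y k i j * W i j =
      c ^ p / 2 * (tauCard X k : ℝ) + c ^ p / 2 * (tauCard Y k : ℝ) -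
        ∑ i, ∑ j, a i j * W i.castSucc j.castSucc := by
    simp only [Fin.sum_univ_castSucc (n := nX), Fin.sum_univ_castSucc (n := nY)]
    simp only [hD1, hD2, hD3, hD4, zero_mul, add_zero]
    have expand : ∀ (i : Fin nX) (j : Fin nY),
        (c ^ p / 2 * (χX i + χY j) - a i j) * W i.castSucc j.castSucc =
          c ^ p / 2 * χX i * W i.castSucc j.castSucc +
          c ^ p / 2 * χY j * W i.castSucc j.castSucc -
          a i j * W i.castSucc j.castSucc := fun i j => by ring
    simp only [expand, Finset.sum_add_distrib, Finset.sum_sub_distrib]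
    have keyX : (∑ i : Fin nX, ∑ j : Fin nY, c ^ p / 2 * χX i * W i.castSucc j.castSucc) +
        (∑ i : Fin nX, c ^ p / 2 * χX i * W i.castSucc (Fin.last nY)) =
        c ^ p / 2 * (tauCard X k : ℝ) := by
      rw [hτX, Finset.mul_sum, ← Finset.sum_add_distrib]
      refine Finset.sum_congr rfl fun i _ => ?_
      have : ∑ j : Fin nY, c ^ p / 2 * χX i * W i.castSucc j.castSucc =
          c ^ p / 2 * χX i * ∑ j : Fin nY, W i.castSucc j.castSucc := by
        rw [Finset.mul_sum]
      rw [this, ← mul_add, hrowfull i, mul_one]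
    have keyY : (∑ i : Fin nX, ∑ j : Fin nY, c ^ p / 2 * χY j * W i.castSucc j.castSucc) +
        (∑ j : Fin nY, c ^ p / 2 * χY j * W (Fin.last nX) j.castSucc) =
        c ^ p / 2 * (tauCard Y k : ℝ) := by
      rw [hτY, Finset.mul_sum, Finset.sum_comm, ← Finset.sum_add_distrib]
      refine Finset.sum_congr rfl fun j _ => ?_
      have : ∑ i : Fin nX, c ^ p / 2 * χY j * W i.castSucc j.castSucc =
          c ^ p / 2 * χY j * ∑ i : Fin nX, W i.castSucc j.castSucc := by
        rw [Finset.mul_sum]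
      rw [this, ← mul_add, hcolfull j, mul_one]
    linarith [keyX, keyY]
  -- fractional matching
  have hrow' : ∀ i : Fin nX, ∑ j : Fin nY, W i.castSucc j.castSucc ≤ 1 := by
    intro i
    have := hrowfull i
    have := hW0 i.castSucc (Fin.last nY)
    linarith
  have hcol' : ∀ j : Fin nY, ∑ i : Fin nX, W i.castSucc j.castSucc ≤ 1 := by
    intro j
    have := hcolfull j
    have := hW0 (Fin.last nX) j.castSucc
    linarith
  obtain ⟨θ, hmatch, hsum⟩ := fracMatching a (fun i j => W i.castSucc j.castSucc)
    (fun i j => hW0 _ _) hrow' hcol'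
  set θ' := θ.filter (fun q => 0 < a q.1 q.2) with hθ'
  have hsub : θ' ⊆ θ := Finset.filter_subset _ _
  have hpos : ∀ q ∈ θ', 0 < a q.1 q.2 := fun q hq => (Finset.mem_filter.1 hq).2
  have hvalid : ValidTheta X Y k θ' := by
    constructor
    · intro q hq
      constructor
      · intro hX
        exact absurd (hanone q.1 q.2 (Or.inl hX)) (hpos q hq).ne'
      · intro hY
        exact absurd (hanone q.1 q.2 (Or.inr hY)) (hpos q hq).ne'
    · intro q hq q' hq' hor
      exact hmatch q (hsub hq) q' (hsub hq') hor
  have hopt : ∀ q ∈ θ', optDist (X q.1 k) (Y q.2 k) ^ p = c ^ p - a q.1 q.2 := by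
    intro q hq
    have hpq := hpos q hq
    rcases hXi : X q.1 k with _ | x
    · exact absurd (hanone q.1 q.2 (Or.inl hXi)) hpq.ne'
    rcases hYj : Y q.2 k with _ | y
    · exact absurd (hanone q.1 q.2 (Or.inr hYj)) hpq.ne'
    have haq : a q.1 q.2 = c ^ p - min c (dist x y) ^ p := by
      simp only [ha, hχX, hχY, hXi, hYj, dG, Option.isSome_some, if_true]
      ring
    have hdlt : dist x y < c := by
      by_contra h
      push_neg at h
      rw [haq, min_eq_left h] at hpq
      simp at hpq
    have hmin : min c (dist x y) = dist x y := min_eq_right hdlt.le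
    rw [optDist, haq, hmin]
    ring
  have hfil : ∑ q ∈ θ', a q.1 q.2 = ∑ q ∈ θ, a q.1 q.2 := by
    rw [hθ']
    exact Finset.sum_filter_of_ne fun q hq hne => lt_of_le_of_ne (ha0 _ _) (Ne.symm hne)
  have hbdd : BddBelow {r | ∃ θ : Finset (Fin nX × Fin nY), ValidTheta X Y k θ ∧
      r = ∑ q ∈ θ, optDist (X q.1 k) (Y q.2 k) ^ p +
        c ^ p / 2 * ((tauCard X k : ℝ) + (tauCard Y k : ℝ) - 2 * (θ.card : ℝ))} :=
    ⟨0, fun r hr => gospa_set_nonneg hc hp X Y k r hr⟩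
  have hmem := csInf_le hbdd ⟨θ', hvalid, rfl⟩
  refine hmem.trans ?_
  rw [hSid]
  have hsum1 : ∑ q ∈ θ', optDist (X q.1 k) (Y q.2 k) ^ p =
      c ^ p * (θ'.card : ℝ) - ∑ q ∈ θ', a q.1 q.2 := by
    rw [Finset.sum_congr rfl hopt, Finset.sum_sub_distrib, Finset.sum_const,
      nsmul_eq_mul]
    ring
  rw [hsum1, hfil]
  have h2 : c ^ p / 2 * ((tauCard X k : ℝ) + (tauCard Y k : ℝ) - 2 * (θ'.card : ℝ)) =
      c ^ p / 2 * (tauCard X k : ℝ) + c ^ p / 2 * (tauCard Y k : ℝ) -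
        c ^ p * (θ'.card : ℝ) := by ring
  rw [h2]
  linarith [hsum]

/-- A canonical relaxed matrix: match everything to the dummy. -/
def W0mat (m n : ℕ) : Matrix (Fin (m + 1)) (Fin (n + 1)) ℝ :=
  fun i j =>
    if i = Fin.last m then (if j = Fin.last n then 0 else 1)
    else (if j = Fin.last n then 1 else 0)

lemma W0mat_relaxed (m n : ℕ) : Relaxed (W0mat m n) := by
  refine ⟨?_, ?_, ?_, ?_⟩
  · intro i j
    unfold W0mat
    split <;> split <;> norm_num
  · intro j
    have hj : j.castSucc ≠ Fin.last n := (Fin.castSucc_lt_last j).ne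
    simp [W0mat, hj, Finset.sum_ite_eq']
  · intro i
    have hi : i.castSucc ≠ Fin.last m := (Fin.castSucc_lt_last i).ne
    simp [W0mat, hi, Finset.sum_ite_eq']
  · simp [W0mat]

/-- `d^0` is a lower bound on the time-weighted LP trajectory metric. -/
theorem d0_le_dbar {E : Type*} [MetricSpace E] {T nX nY : ℕ}
    (c p γ : ℝ) (hc : 0 < c) (hp : 1 ≤ p) (hγ : 0 < γ)
    (w1 w2 : ℕ → ℝ) (hw1 : ∀ k < T, 0 < w1 k) (hw2 : ∀ k < T - 1, 0 < w2 k)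
    (X : Fin nX → Fin T → Option E) (Y : Fin nY → Fin T → Option E) :
    d0 c p w1 X Y ≤ dbar c p γ w1 w2 X Y := by
  classical
  have hp0 : 0 < p := lt_of_lt_of_le one_pos hp
  have hne : Nonempty {W : Fin T → Matrix (Fin (nX + 1)) (Fin (nY + 1)) ℝ //
      ∀ k, Relaxed (W k)} :=
    ⟨⟨fun _ => W0mat nX nY, fun _ => W0mat_relaxed nX nY⟩⟩
  rw [dbar]
  refine le_ciInf fun Wp => ?_
  obtain ⟨W, hW⟩ := Wp
  rw [d0, obj]
  refine Real.rpow_le_rpow ?_ ?_ (one_div_nonneg.2 hp0.le)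
  · refine Finset.sum_nonneg fun k _ => mul_nonneg (hw1 k.1 k.2).le ?_
    rw [gospaP]
    exact Real.sInf_nonneg (gospa_set_nonneg hc hp X Y k)
  · have h1 : ∑ k : Fin T, w1 k.1 * gospaP c p X Y k ≤
        ∑ k : Fin T, w1 k.1 * ∑ i, ∑ j, Dmat c p X Y k i j * W k i j :=
      Finset.sum_le_sum fun k _ =>
        mul_le_mul_of_nonneg_left (step_le hc hp X Y k (W k) (hW k)) (hw1 k.1 k.2).le
    refine h1.trans (le_add_of_nonneg_right ?_)
    refine mul_nonneg (div_nonneg (Real.rpow_nonneg hγ.le _) (by norm_num)) ?_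
    refine Finset.sum_nonneg fun k _ => mul_nonneg (hw2 k.1 k.2).le ?_
    exact Finset.sum_nonneg fun i _ => Finset.sum_nonneg fun j _ => abs_nonneg _
end
end
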